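/- For any even n, d(L(n, 2n-1)) = n² - n; i.e., there exists a partial coloring of the n×n square with exactly n uncolored entries (one per row and column) that uniquely extends to a proper coloring with 2n-1 colors, and no partial coloring with more than n uncolored entries uniquely extends. -/

import Mathlib

/-- An `L(n,k)`: an `n × n` array colored with `k` colors such that all entries
in any row and any column have distinct colors. -/
def IsLatin (n k : ℕ) (L : Fin n → Fin n → Fin k) : Prop :=
  (∀ i : Fin n, Function.Injective (L i)) ∧
  (∀ j : Fin n, Function.Injective (fun i => L i j))

/-- `L` extends the partial coloring `P`. -/
def ExtendsPC {n k : ℕ} (P : Fin n → Fin n → Option (Fin k))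
    (L : Fin n → Fin n → Fin k) : Prop :=
  ∀ i j c, P i j = some c → L i j = c

/-- The partial coloring `P` uniquely extends to an `L(n,k)`. -/
def UniquelyExtends (n k : ℕ) (P : Fin n → Fin n → Option (Fin k)) : Prop :=
  ∃! L : Fin n → Fin n → Fin k, IsLatin n k L ∧ ExtendsPC P L

/-- Number of uncolored entries of a partial coloring. -/
def numUncolored {n k : ℕ} (P : Fin n → Fin n → Option (Fin k)) : ℕ :=
  (Finset.univ.filter (fun p : Fin n × Fin n => P p.1 p.2 = none)).card

/-- Number of colored entries of a partial coloring. -/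
def numColored {n k : ℕ} (P : Fin n → Fin n → Option (Fin k)) : ℕ :=
  (Finset.univ.filter (fun p : Fin n × Fin n => P p.1 p.2 ≠ none)).card

/-- The defining number `d(L(n,k))`. -/
noncomputable def definingNumber (n k : ℕ) : ℕ :=
  sInf {m | ∃ P : Fin n → Fin n → Option (Fin k),
    UniquelyExtends n k P ∧ numColored P = m}

/-- The set of available colors for entry `(i,j)`: colors not appearing among
the colored entries of row `i` or column `j`. -/
def availColors {n k : ℕ} (P : Fin n → Fin n → Option (Fin k)) (i j : Fin n) :
    Finset (Fin k) :=
  Finset.univ.filter (fun c => (∀ w, P i w ≠ some c) ∧ (∀ h, P h j ≠ some c))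

/-!
If a cell `(a, b)` of a uniquely extendable partial coloring is empty, every color other than the
forced one must already occur in row `a` or column `b`; as there are only `2n - 1` colors, the
`2n - 2` other cells of that row and column carry pairwise distinct colors. Two empty cells
`(i, j)` and `(i, j')` in one row could therefore be swapped in the extension, so at most `n` cells
are empty. Conversely, for even `n` a round-robin schedule of `n` players in `n - 1` rounds, with
the rounds shifted by `1` above and by `n` below the diagonal and color `0` on the diagonal, is an
`L(n, 2n - 1)` in which every diagonal cell sees all `2n - 2` other colors in its row and column;
erasing the diagonal leaves a uniquely extendable coloring with `n` empty cells.
-/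

open Finset Function

section Latin

variable {n k : ℕ}

theorem Function.Injective.update_of_forall_ne {α β : Type*} [DecidableEq α] {f : α → β}
    (hf : Injective f) {a : α} {b : β} (hb : ∀ x ≠ a, f x ≠ b) : Injective (update f a b) := by
  intro x y h
  by_cases hx : x = a <;> by_cases hy : y = a
  · exact hx.trans hy.symm
  · subst hx
    rw [update_self, update_of_ne hy] at h
    exact absurd h.symm (hb y hy)
  · subst hy
    rw [update_self, update_of_ne hx] at h
    exact absurd h (hb x hx)
  · rw [update_of_ne hx, update_of_ne hy] at h
    exact hf h

theorem IsLatin.update_row {L : Fin n → Fin n → Fin k} (hL : IsLatin n k L) {a : Fin n}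
    {r : Fin n → Fin k} (hr : Injective r) (hcol : ∀ x ≠ a, ∀ q, L x q ≠ r q) :
    IsLatin n k (update L a r) := by
  refine ⟨fun p => ?_, fun q => ?_⟩
  · rcases eq_or_ne p a with rfl | hp
    · simpa using hr
    · simpa [hp] using hL.1 p
  · have hq : (fun p => update L a r p q) = update (fun p => L p q) a (r q) :=
      funext (apply_update (fun _ g => g q) L a r)
    rw [hq]
    exact (hL.2 q).update_of_forall_ne fun x hx => hcol x hx q

theorem UniquelyExtends.eq_row {P : Fin n → Fin n → Option (Fin k)} (hP : UniquelyExtends n k P)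
    {L : Fin n → Fin n → Fin k} (hL : IsLatin n k L) (hLP : ExtendsPC P L) {a : Fin n}
    {r : Fin n → Fin k} (hr : Injective r) (hcol : ∀ x ≠ a, ∀ q, L x q ≠ r q)
    (hrP : ∀ q c, P a q = some c → r q = c) : r = L a := by
  have hL'P : ExtendsPC P (update L a r) := by
    intro p q c h
    rcases eq_or_ne p a with rfl | hp
    · simpa using hrP q c h
    · simpa [hp] using hLP p q c h
  simpa using congrFun (hP.unique ⟨hL.update_row hr hcol, hL'P⟩ ⟨hL, hLP⟩) a

end Latin

section Cross

variable {n k : ℕ}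

def crossColors (L : Fin n → Fin n → Fin k) (a b : Fin n) : Finset (Fin k) :=
  (univ.erase b).image (L a) ∪ (univ.erase a).image (fun x => L x b)

theorem IsLatin.notMem_crossColors {L : Fin n → Fin n → Fin k} (hL : IsLatin n k L)
    (a b : Fin n) : L a b ∉ crossColors L a b := by
  simp only [crossColors, mem_union, mem_image, mem_erase, mem_univ, and_true, not_or,
    not_exists, not_and]
  exact ⟨fun w hw h => hw (hL.1 a h), fun x hx h => hx (hL.2 b h)⟩

theorem IsLatin.le_card_crossColors_iff {L : Fin n → Fin n → Fin k} (hL : IsLatin n k L)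
    (a b : Fin n) :
    2 * (n - 1) ≤ #(crossColors L a b) ↔ ∀ w ≠ b, ∀ x ≠ a, L a w ≠ L x b := by
  unfold crossColors
  set A := (univ.erase b).image (L a)
  set B := (univ.erase a).image (fun x => L x b)
  have hA : #A = n - 1 := by
    rw [card_image_of_injective _ (hL.1 a), card_erase_of_mem (mem_univ _), card_univ,
      Fintype.card_fin]
  have hB : #B = n - 1 := by
    rw [card_image_of_injective _ (hL.2 b), card_erase_of_mem (mem_univ _), card_univ,
      Fintype.card_fin]
  have hAB := card_union_add_card_inter A B
  have hdisj : Disjoint A B ↔ ∀ w ≠ b, ∀ x ≠ a, L a w ≠ L x b := by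
    simp only [A, B, disjoint_left, mem_image, mem_erase, mem_univ, and_true,
      forall_exists_index, and_imp, not_exists, not_and]
    exact ⟨fun h w hw x hx hwx => h w hw rfl x hx hwx.symm,
      fun h _ w hw hwc x hx hxc => h w hw x hx (hwc.trans hxc.symm)⟩
  rw [← hdisj, disjoint_iff_inter_eq_empty, ← card_eq_zero]
  omega

theorem IsLatin.crossColors_eq_erase {L : Fin n → Fin n → Fin (2 * n - 1)}
    (hL : IsLatin n (2 * n - 1) L) {a b : Fin n} (hab : ∀ w ≠ b, ∀ x ≠ a, L a w ≠ L x b) :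
    crossColors L a b = univ.erase (L a b) := by
  refine eq_of_subset_of_card_le (fun v hv => mem_erase.2 ⟨?_, mem_univ v⟩) ?_
  · rintro rfl
    exact hL.notMem_crossColors a b hv
  · rw [card_erase_of_mem (mem_univ _), card_univ, Fintype.card_fin]
    have := (hL.le_card_crossColors_iff a b).2 hab
    omega

theorem UniquelyExtends.row_ne_col {P : Fin n → Fin n → Option (Fin (2 * n - 1))}
    (hP : UniquelyExtends n (2 * n - 1) P) {L : Fin n → Fin n → Fin (2 * n - 1)}
    (hL : IsLatin n (2 * n - 1) L) (hLP : ExtendsPC P L) {a b : Fin n} (hab : P a b = none) :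
    ∀ w ≠ b, ∀ x ≠ a, L a w ≠ L x b := by
  have hsub : univ.erase (L a b) ⊆ crossColors L a b := by
    intro v hv
    by_contra hvL
    simp only [crossColors, mem_union, mem_image, mem_erase, mem_univ, and_true, not_or,
      not_exists, not_and] at hvL
    have hcol : ∀ x ≠ a, ∀ q, L x q ≠ update (L a) b v q := by
      intro x hx q
      rcases eq_or_ne q b with rfl | hq
      · rw [update_self]
        exact hvL.2 x hx
      · rw [update_of_ne hq]
        exact fun h => hx (hL.2 q h)
    have hrP : ∀ q c, P a q = some c → update (L a) b v q = c := by
      intro q c h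
      rw [update_of_ne (by rintro rfl; simp [hab] at h)]
      exact hLP a q c h
    have hr := hP.eq_row hL hLP ((hL.1 a).update_of_forall_ne hvL.1) hcol hrP
    exact (mem_erase.1 hv).1 (by simpa using congrFun hr b)
  refine (hL.le_card_crossColors_iff a b).1 ?_
  have := card_le_card hsub
  rw [card_erase_of_mem (mem_univ _), card_univ, Fintype.card_fin] at this
  omega

end Cross

section LowerBound

variable {n : ℕ}

theorem UniquelyExtends.eq_of_eq_none_of_eq_none {P : Fin n → Fin n → Option (Fin (2 * n - 1))}
    (hP : UniquelyExtends n (2 * n - 1) P) {i j j' : Fin n} (hj : P i j = none)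
    (hj' : P i j' = none) : j = j' := by
  obtain ⟨L, ⟨hL, hLP⟩, -⟩ := id hP
  by_contra hjj
  have hcol : ∀ x ≠ i, ∀ q, L x q ≠ (L i ∘ Equiv.swap j j') q := by
    intro x hx q
    rcases eq_or_ne q j with rfl | hqj
    · simpa using (hP.row_ne_col hL hLP hj j' (Ne.symm hjj) x hx).symm
    rcases eq_or_ne q j' with rfl | hqj'
    · simpa using (hP.row_ne_col hL hLP hj' j hjj x hx).symm
    · simpa [Equiv.swap_apply_of_ne_of_ne hqj hqj'] using fun h => hx (hL.2 q h)
  have hrP : ∀ q c, P i q = some c → (L i ∘ Equiv.swap j j') q = c := by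
    intro q c h
    have hqj : q ≠ j := by rintro rfl; simp [hj] at h
    have hqj' : q ≠ j' := by rintro rfl; simp [hj'] at h
    simpa [Equiv.swap_apply_of_ne_of_ne hqj hqj'] using hLP i q c h
  have hr := hP.eq_row hL hLP ((hL.1 i).comp (Equiv.injective _)) hcol hrP
  exact hjj (hL.1 i (by simpa using congrFun hr j)).symm

theorem exists_eq_none_of_lt_numUncolored {k : ℕ} {P : Fin n → Fin n → Option (Fin k)}
    (h : n < numUncolored P) : ∃ i j j', j ≠ j' ∧ P i j = none ∧ P i j' = none := by
  obtain ⟨i, -, hi⟩ := exists_lt_card_fiber_of_mul_lt_card_of_maps_to (f := Prod.fst)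
    (s := univ.filter fun p : Fin n × Fin n => P p.1 p.2 = none) (t := univ) (n := 1)
    (fun _ _ => mem_univ _) (by simpa [numUncolored] using h)
  obtain ⟨p, hp, q, hq, hpq⟩ := one_lt_card.1 hi
  simp only [mem_filter] at hp hq
  refine ⟨i, p.2, q.2, fun h => hpq (Prod.ext (hp.2.trans hq.2.symm) h), ?_, ?_⟩
  · rw [← hp.2]
    exact hp.1.2
  · rw [← hq.2]
    exact hq.1.2

theorem not_uniquelyExtends_of_lt_numUncolored {P : Fin n → Fin n → Option (Fin (2 * n - 1))}
    (h : n < numUncolored P) : ¬ UniquelyExtends n (2 * n - 1) P := fun hP =>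
  let ⟨_, _, _, hjj, hj, hj'⟩ := exists_eq_none_of_lt_numUncolored h
  hjj (hP.eq_of_eq_none_of_eq_none hj hj')

theorem numColored_add_numUncolored {k : ℕ} (P : Fin n → Fin n → Option (Fin k)) :
    numColored P + numUncolored P = n ^ 2 := by
  have h := card_filter_add_card_filter_not (s := univ) fun p : Fin n × Fin n => P p.1 p.2 ≠ none
  simp only [not_not, card_univ, Fintype.card_prod, Fintype.card_fin] at h
  rw [numColored, numUncolored, h, sq]

theorem le_numColored_of_uniquelyExtends {P : Fin n → Fin n → Option (Fin (2 * n - 1))}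
    (hP : UniquelyExtends n (2 * n - 1) P) : n ^ 2 - n ≤ numColored P := by
  have := numColored_add_numUncolored P
  have := le_of_not_gt fun h => not_uniquelyExtends_of_lt_numUncolored h hP
  omega

end LowerBound

section OffDiagonal

variable {n k : ℕ}

def offDiagonal (L : Fin n → Fin n → Fin k) : Fin n → Fin n → Option (Fin k) :=
  fun i j => if i = j then none else some (L i j)

theorem offDiagonal_eq_none_iff {L : Fin n → Fin n → Fin k} {i j : Fin n} :
    offDiagonal L i j = none ↔ i = j := by
  by_cases h : i = j <;> simp [offDiagonal, h]

theorem numUncolored_offDiagonal (L : Fin n → Fin n → Fin k) :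
    numUncolored (offDiagonal L) = n := by
  have h : (univ.filter fun p : Fin n × Fin n => offDiagonal L p.1 p.2 = none) =
      (univ : Finset (Fin n)).diag := by
    ext
    simp [offDiagonal_eq_none_iff]
  rw [numUncolored, h, diag_card, card_univ, Fintype.card_fin]

theorem uniquelyExtends_offDiagonal {L : Fin n → Fin n → Fin (2 * n - 1)}
    (hL : IsLatin n (2 * n - 1) L) (hcross : ∀ i, ∀ w ≠ i, ∀ x ≠ i, L i w ≠ L x i) :
    UniquelyExtends n (2 * n - 1) (offDiagonal L) := by
  have hLP : ExtendsPC (offDiagonal L) L := by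
    intro i j c h
    by_cases hij : i = j <;> simp_all [offDiagonal]
  refine ⟨L, ⟨hL, hLP⟩, fun L' ⟨hL', hL'P⟩ => funext₂ fun i j => ?_⟩
  have hoff : ∀ i j, i ≠ j → L' i j = L i j := fun i j h => hL'P i j _ (by simp [offDiagonal, h])
  rcases eq_or_ne i j with rfl | hij
  · have hcc : crossColors L' i i = crossColors L i i := by
      unfold crossColors
      congr 1 <;> refine image_congr fun x hx => ?_
      · exact hoff i x (Ne.symm (mem_erase.1 hx).1)
      · exact hoff x i (mem_erase.1 hx).1
    have h := hL'.notMem_crossColors i i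
    rw [hcc, hL.crossColors_eq_erase (hcross i)] at h
    simpa using h
  · exact hoff i j hij

end OffDiagonal

theorem Nat.mod_eq_ite_of_lt_two_mul {x m : ℕ} (h : x < 2 * m) :
    x % m = if x < m then x else x - m := by
  split_ifs with hx
  · exact Nat.mod_eq_of_lt hx
  · rw [Nat.mod_eq_sub_mod (by omega), Nat.mod_eq_of_lt (by omega)]

/-- The circle method: player `n - 1` sits in the middle, and in round `t` player `i < n - 1`
meets the player `j` with `i + j ≡ t`, or the middle one if `2 * i ≡ t (mod n - 1)`. -/
def roundRobin (n i j : ℕ) : ℕ :=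
  if i = n - 1 then 2 * j % (n - 1)
  else if j = n - 1 then 2 * i % (n - 1)
  else (i + j) % (n - 1)

section RoundRobin

variable {n i j j' : ℕ}

theorem roundRobin_lt (hi : i < n) (hj : j < n) (hij : i ≠ j) : roundRobin n i j < n - 1 := by
  unfold roundRobin; split_ifs <;> exact Nat.mod_lt _ (by omega)

theorem roundRobin_comm (i j : ℕ) : roundRobin n i j = roundRobin n j i := by
  unfold roundRobin; split_ifs <;> first | rfl | omega | (subst_vars; rfl) | rw [Nat.add_comm]

theorem roundRobin_injective (hn : Even n) (hi : i < n) (hj : j < n) (hj' : j' < n)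
    (hji : j ≠ i) (hj'i : j' ≠ i) (h : roundRobin n i j = roundRobin n i j') : j = j' := by
  obtain ⟨r, rfl⟩ := hn
  unfold roundRobin at h
  split_ifs at h <;> (repeat rw [Nat.mod_eq_ite_of_lt_two_mul (by omega)] at h) <;>
    split_ifs at h <;> omega

end RoundRobin

def roundRobinSquare (n : ℕ) (i j : Fin n) : Fin (2 * n - 1) :=
  ⟨if i = j then 0 else roundRobin n i j + if i < j then 1 else n, by
    split_ifs with h
    · omega
    · have := roundRobin_lt i.isLt j.isLt (Fin.val_ne_of_ne h); omega
    · have := roundRobin_lt i.isLt j.isLt (Fin.val_ne_of_ne h); omega⟩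

section RoundRobinSquare

variable {n : ℕ}

theorem roundRobinSquare_row_injective (hn : Even n) (i : Fin n) :
    Injective (roundRobinSquare n i) := by
  intro j j' h
  have h := congrArg Fin.val h
  simp only [roundRobinSquare, Fin.lt_def, Fin.ext_iff] at h ⊢
  have := roundRobin_lt i.isLt j.isLt
  have := roundRobin_lt i.isLt j'.isLt
  have := roundRobin_injective hn i.isLt j.isLt j'.isLt
  split_ifs at h <;> grind

theorem roundRobinSquare_col_injective (hn : Even n) (j : Fin n) :
    Injective (fun i => roundRobinSquare n i j) := by
  intro i i' h
  have h := congrArg Fin.val h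
  simp only [roundRobinSquare, Fin.lt_def, Fin.ext_iff] at h ⊢
  rw [roundRobin_comm i, roundRobin_comm i'] at h
  have := roundRobin_lt j.isLt i.isLt
  have := roundRobin_lt j.isLt i'.isLt
  have := roundRobin_injective hn j.isLt i.isLt i'.isLt
  split_ifs at h <;> grind

theorem roundRobinSquare_row_ne_col (hn : Even n) {i w x : Fin n} (hw : w ≠ i) (hx : x ≠ i) :
    roundRobinSquare n i w ≠ roundRobinSquare n x i := by
  intro h
  have h := congrArg Fin.val h
  rw [← Fin.val_ne_iff] at hw hx
  simp only [roundRobinSquare, Fin.lt_def, Fin.ext_iff] at h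
  rw [roundRobin_comm x] at h
  have := roundRobin_lt i.isLt w.isLt
  have := roundRobin_lt i.isLt x.isLt
  have := roundRobin_injective hn i.isLt w.isLt x.isLt
  split_ifs at h <;> grind

end RoundRobinSquare

theorem defining_number_2n_minus_1_even (n : ℕ) (hn : Even n) :
    definingNumber n (2*n-1) = n^2 - n ∧
    (∃ P : Fin n → Fin n → Option (Fin (2*n-1)),
      UniquelyExtends n (2*n-1) P ∧ numUncolored P = n ∧
      (∀ i : Fin n, ∃! j : Fin n, P i j = none) ∧
      (∀ j : Fin n, ∃! i : Fin n, P i j = none)) ∧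
    (∀ P : Fin n → Fin n → Option (Fin (2*n-1)),
      n < numUncolored P → ¬ UniquelyExtends n (2*n-1) P) := by
  set P := offDiagonal (roundRobinSquare n)
  have hP : UniquelyExtends n (2 * n - 1) P := uniquelyExtends_offDiagonal
    ⟨roundRobinSquare_row_injective hn, roundRobinSquare_col_injective hn⟩
    fun _ _ hw _ hx => roundRobinSquare_row_ne_col hn hw hx
  have hPn : numUncolored P = n := numUncolored_offDiagonal _
  have hPcol : numColored P = n ^ 2 - n := by
    have := numColored_add_numUncolored P
    omega
  refine ⟨?_, ⟨P, hP, hPn, fun i => ⟨i, ?_, ?_⟩, fun j => ⟨j, ?_, ?_⟩⟩,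
    fun _ => not_uniquelyExtends_of_lt_numUncolored⟩
  · refine IsLeast.csInf_eq ⟨⟨P, hP, hPcol⟩, ?_⟩
    rintro _ ⟨Q, hQ, rfl⟩
    exact le_numColored_of_uniquelyExtends hQ
  all_goals simp [P, offDiagonal_eq_none_iff, eq_comm]
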